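/- (Variance part of Theorem 2, single-observation content.) For every α ≥ 0, parameter β, and covariate x ∈ ℝ^{k+1}, the second moment of the RP score under the model satisfies Σ_{j=1}^{d+1} π_j(x,β)·Ψ_α(β,x,e_j)·Ψ_α(β,x,e_j)ᵀ = Γ(α)^{−2α/(1+α)}·J(2α) + Γ(α)^{−1−2α/(1+α)}·[ (Γ(2α)/Γ(α))·ξ(α)ξ(α)ᵀ − ξ(2α)ξ(α)ᵀ − ξ(α)ξ(2α)ᵀ ], an identity of d(k+1)×d(k+1) matrices, where e_j is the j-th standard basis vector of ℝ^{d+1}. -/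

import Mathlib

open Matrix Filter

noncomputable section

/-- PLRM probabilities. -/
def plrmPi {d k : ℕ} (x : Fin (k + 1) → ℝ) (β : Fin d → Fin (k + 1) → ℝ)
    (j : Fin (d + 1)) : ℝ :=
  (if h : (j : ℕ) < d then Real.exp (∑ t, x t * β ⟨j, h⟩ t) else 1) /
    (1 + ∑ s : Fin d, Real.exp (∑ t, x t * β s t))

/-- `Δ(p) = diag(p) − ppᵀ`. -/
def deltaMat {n : ℕ} (p : Fin n → ℝ) : Matrix (Fin n) (Fin n) ℝ :=
  Matrix.diagonal p - Matrix.vecMulVec p p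

/-- `Δ*(π)`: `Δ(π)` with its last row deleted. -/
def deltaStar {d : ℕ} (π : Fin (d + 1) → ℝ) : Matrix (Fin d) (Fin (d + 1)) ℝ :=
  Matrix.of fun m j => deltaMat π m.castSucc j

/-- `diag^γ(π)`. -/
def diagPow {d : ℕ} (π : Fin (d + 1) → ℝ) (γ : ℝ) : Matrix (Fin (d + 1)) (Fin (d + 1)) ℝ :=
  Matrix.diagonal fun j => π j ^ γ

/-- `Γ(α) = ∑_{j=1}^{d+1} π_j(x,β)^{α+1}`. -/
def Gam {d k : ℕ} (α : ℝ) (x : Fin (k + 1) → ℝ) (β : Fin d → Fin (k + 1) → ℝ) : ℝ :=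
  ∑ j, plrmPi x β j ^ (α + 1)

/-- `Υ(α,y) = ∑_{j=1}^{d+1} π_j(x,β)^α y_j`. -/
def Ups {d k : ℕ} (α : ℝ) (x : Fin (k + 1) → ℝ) (β : Fin d → Fin (k + 1) → ℝ)
    (y : Fin (d + 1) → ℝ) : ℝ :=
  ∑ j, plrmPi x β j ^ α * y j

/-- The RP score `Ψ_α(β,x,y) ∈ ℝ^{d(k+1)}`, indexed by block `m` and coordinate `t`. -/
def psiVec {d k : ℕ} (α : ℝ) (x : Fin (k + 1) → ℝ) (β : Fin d → Fin (k + 1) → ℝ)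
    (y : Fin (d + 1) → ℝ) : Fin d × Fin (k + 1) → ℝ :=
  fun p =>
    Gam α x β ^ (-(α / (1 + α))) *
      (plrmPi x β p.1.castSucc ^ α * y p.1.castSucc -
        Ups α x β y / Gam α x β * plrmPi x β p.1.castSucc ^ (α + 1)) * x p.2

/-- `ξ(α) = (Δ*(π)·diag^{α−1}(π)·π) ⊗ x ∈ ℝ^{d(k+1)}`. -/
def xiVec {d k : ℕ} (α : ℝ) (x : Fin (k + 1) → ℝ) (π : Fin (d + 1) → ℝ) :
    Fin d × Fin (k + 1) → ℝ :=
  fun p => (deltaStar π *ᵥ (diagPow π (α - 1) *ᵥ π)) p.1 * x p.2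

/-- `J(α) = (Δ*(π)·diag^{α−1}(π)·Δ*(π)ᵀ) ⊗ (xxᵀ)`. -/
def Jmat {d k : ℕ} (α : ℝ) (x : Fin (k + 1) → ℝ) (π : Fin (d + 1) → ℝ) :
    Matrix (Fin d × Fin (k + 1)) (Fin d × Fin (k + 1)) ℝ :=
  Matrix.of fun p q =>
    (deltaStar π * diagPow π (α - 1) * (deltaStar π)ᵀ) p.1 q.1 * (x p.2 * x q.2)

/-!
For `y = e_j` the score is `Γ(α)^{-α/(1+α)} · s_j ⊗ x` with
`s_j(m) = π_m^α δ_{mj} - π_j^α π_m^{α+1} / Γ(α)`, so every entry of either side is `x_t x_u`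
times an entry of a `d × d` matrix. Both the second moment of `s_j` and the entries of `J(γ)`
are sums `∑_j w_j (u_i δ_{ij} - c_j v_i)(u_{i'} δ_{i'j} - c_j v_{i'})`, which expand in closed
form, and `ξ(γ)_m = π_m^{γ+1} - π_m Γ(γ)`. Once all powers of `π` are written as `π^{α+1}` and
`π^{2α+1}`, what is left is a rational identity in `Γ(α)` and `Γ(2α)`.
-/

theorem sum_mul_ite_sub_mul_ite_sub {ι : Type*} [Fintype ι] [DecidableEq ι]
    (w u c v : ι → ℝ) (i i' : ι) :
    ∑ j, ((if i = j then u i else 0) - c j * v i) * w j *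
        ((if i' = j then u i' else 0) - c j * v i') =
      (if i = i' then w i * u i ^ 2 else 0) - w i * u i * c i * v i'
        - w i' * u i' * c i' * v i + v i * v i' * ∑ j, w j * c j ^ 2 := by
  have hexpand : ∀ j, ((if i = j then u i else 0) - c j * v i) * w j *
      ((if i' = j then u i' else 0) - c j * v i') =
      (if i = j then w j * u i * (if i' = j then u i' else 0) else 0)
        - (if i = j then w j * u i * c j * v i' else 0)
        - (if i' = j then w j * u i' * c j * v i else 0)
        + v i * v i' * (w j * c j ^ 2) := fun j => by
    split_ifs <;> ring
  simp only [hexpand, Finset.sum_add_distrib, Finset.sum_sub_distrib, Finset.sum_ite_eq,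
    Finset.mem_univ, if_true, ← Finset.mul_sum]
  by_cases h : i = i'
  · simp [h, sq, mul_assoc]
  · simp [h, Ne.symm h]

theorem Real.rpow_sub_one_mul_sq {a : ℝ} (ha : 0 < a) (γ : ℝ) :
    a ^ (γ - 1) * a ^ 2 = a ^ (γ + 1) := by
  rw [Real.rpow_sub_one ha.ne', Real.rpow_add_one ha.ne']
  field_simp

theorem Real.mul_rpow_sq {a : ℝ} (ha : 0 < a) (α : ℝ) :
    a * (a ^ α) ^ 2 = a ^ (2 * α + 1) := by
  rw [two_mul, Real.rpow_add_one ha.ne', Real.rpow_add ha]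
  ring

theorem deltaMat_apply {n : ℕ} (p : Fin n → ℝ) (i j : Fin n) :
    deltaMat p i j = (if i = j then p i else 0) - p j * p i := by
  simp [deltaMat, diagonal_apply, vecMulVec_apply, mul_comm]

theorem deltaMat_mulVec_apply {n : ℕ} (p v : Fin n → ℝ) (i : Fin n) :
    (deltaMat p *ᵥ v) i = p i * v i - p i * (p ⬝ᵥ v) := by
  simp [deltaMat, sub_mulVec, mulVec_diagonal, vecMulVec_mulVec, mul_comm]

section DeltaStar

variable {d : ℕ} {p : Fin (d + 1) → ℝ}

theorem diagPow_sub_one_mulVec_self (hp : ∀ j, 0 < p j) (γ : ℝ) :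
    diagPow p (γ - 1) *ᵥ p = fun j => p j ^ γ := by
  ext j
  simp [diagPow, mulVec_diagonal, Real.rpow_sub_one (hp j).ne', (hp j).ne']

theorem deltaStar_mulVec_diagPow_mulVec_apply (hp : ∀ j, 0 < p j) (γ : ℝ) (m : Fin d) :
    (deltaStar p *ᵥ (diagPow p (γ - 1) *ᵥ p)) m =
      p m.castSucc ^ (γ + 1) - p m.castSucc * ∑ j, p j ^ (γ + 1) := by
  have hsucc : ∀ j, p j * p j ^ γ = p j ^ (γ + 1) := fun j => by
    rw [Real.rpow_add_one (hp j).ne', mul_comm]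
  change (deltaMat p *ᵥ _) m.castSucc = _
  simp only [deltaMat_mulVec_apply, diagPow_sub_one_mulVec_self hp, dotProduct, hsucc]

theorem deltaStar_mul_diagPow_mul_transpose_apply (hp : ∀ j, 0 < p j) (γ : ℝ) (m n : Fin d) :
    (deltaStar p * diagPow p (γ - 1) * (deltaStar p)ᵀ) m n =
      (if m.castSucc = n.castSucc then p m.castSucc ^ (γ + 1) else 0)
        - p m.castSucc ^ (γ + 1) * p n.castSucc - p n.castSucc ^ (γ + 1) * p m.castSucc
        + p m.castSucc * p n.castSucc * ∑ j, p j ^ (γ + 1) := by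
  rw [mul_apply]
  simp only [diagPow, mul_diagonal, transpose_apply]
  change ∑ j, deltaMat p m.castSucc j * _ * deltaMat p n.castSucc j = _
  simp only [deltaMat_apply, sum_mul_ite_sub_mul_ite_sub, Real.rpow_sub_one_mul_sq (hp _)]
  -- unfold `p ^ (γ + 1)` at `m` and `n` so that `ring` can match `p ^ (γ - 1) * p * p`
  rw [← Real.rpow_sub_one_mul_sq (hp m.castSucc), ← Real.rpow_sub_one_mul_sq (hp n.castSucc)]
  ring

end DeltaStar

section PLRM

variable {d k : ℕ} (α : ℝ) (x : Fin (k + 1) → ℝ) (β : Fin d → Fin (k + 1) → ℝ)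

theorem plrmPi_pos (j : Fin (d + 1)) : 0 < plrmPi x β j := by
  unfold plrmPi
  split <;> positivity

theorem Gam_pos : 0 < Gam α x β :=
  Finset.sum_pos (fun j _ => Real.rpow_pos_of_pos (plrmPi_pos x β j) _) Finset.univ_nonempty

theorem psiVec_single_apply (j : Fin (d + 1)) (m : Fin d) (t : Fin (k + 1)) :
    psiVec α x β (Pi.single j 1) (m, t) =
      Gam α x β ^ (-(α / (1 + α))) *
        ((if m.castSucc = j then plrmPi x β m.castSucc ^ α else 0) -
          plrmPi x β j ^ α / Gam α x β * plrmPi x β m.castSucc ^ (α + 1)) * x t := by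
  have hUps : Ups α x β (Pi.single j 1) = plrmPi x β j ^ α := by
    simp [Ups, Pi.single_apply]
  simp only [psiVec, hUps, Pi.single_apply]
  split_ifs <;> ring

theorem sum_smul_vecMulVec_psiVec_single_apply (m n : Fin d) (t u : Fin (k + 1)) :
    (∑ j, plrmPi x β j •
        vecMulVec (psiVec α x β (Pi.single j 1)) (psiVec α x β (Pi.single j 1))) (m, t) (n, u) =
      Gam α x β ^ (-(2 * α / (1 + α))) * (x t * x u) *
        ((if m.castSucc = n.castSucc then plrmPi x β m.castSucc ^ (2 * α + 1) else 0)
          - plrmPi x β m.castSucc ^ (2 * α + 1) * plrmPi x β n.castSucc ^ (α + 1) / Gam α x β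
          - plrmPi x β n.castSucc ^ (2 * α + 1) * plrmPi x β m.castSucc ^ (α + 1) / Gam α x β
          + plrmPi x β m.castSucc ^ (α + 1) * plrmPi x β n.castSucc ^ (α + 1) *
              Gam (2 * α) x β / Gam α x β ^ 2) := by
  have hc : Gam α x β ^ (-(2 * α / (1 + α))) =
      Gam α x β ^ (-(α / (1 + α))) * Gam α x β ^ (-(α / (1 + α))) := by
    rw [← Real.rpow_add (Gam_pos α x β)]
    ring_nf
  have hπ := plrmPi_pos x β
  have hH : ∑ j, plrmPi x β j * (plrmPi x β j ^ α / Gam α x β) ^ 2 =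
      Gam (2 * α) x β / Gam α x β ^ 2 := by
    simp only [div_pow, ← mul_div_assoc, ← Finset.sum_div, Real.mul_rpow_sq (hπ _)]
    rfl
  simp only [Matrix.sum_apply, Matrix.smul_apply, vecMulVec_apply, smul_eq_mul,
    psiVec_single_apply]
  rw [hc]
  trans Gam α x β ^ (-(α / (1 + α))) * Gam α x β ^ (-(α / (1 + α))) * (x t * x u) *
    ∑ j, ((if m.castSucc = j then plrmPi x β m.castSucc ^ α else 0) -
          plrmPi x β j ^ α / Gam α x β * plrmPi x β m.castSucc ^ (α + 1)) * plrmPi x β j *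
        ((if n.castSucc = j then plrmPi x β n.castSucc ^ α else 0) -
          plrmPi x β j ^ α / Gam α x β * plrmPi x β n.castSucc ^ (α + 1))
  · rw [Finset.mul_sum]
    exact Finset.sum_congr rfl fun j _ => by ring
  · rw [sum_mul_ite_sub_mul_ite_sub (plrmPi x β) (fun i => plrmPi x β i ^ α)
      (fun j => plrmPi x β j ^ α / Gam α x β) (fun i => plrmPi x β i ^ (α + 1)), hH,
      ← Real.mul_rpow_sq (hπ m.castSucc), ← Real.mul_rpow_sq (hπ n.castSucc)]
    ring

end PLRM

theorem statement8_general (d k : ℕ) (α : ℝ)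
    (β : Fin d → Fin (k + 1) → ℝ) (x : Fin (k + 1) → ℝ) :
    (∑ j : Fin (d + 1), plrmPi x β j •
        Matrix.vecMulVec (psiVec α x β (Pi.single j 1)) (psiVec α x β (Pi.single j 1))) =
      Gam α x β ^ (-(2 * α / (1 + α))) • Jmat (2 * α) x (fun j => plrmPi x β j) +
      Gam α x β ^ (-1 - 2 * α / (1 + α)) •
        ((Gam (2 * α) x β / Gam α x β) •
            Matrix.vecMulVec (xiVec α x fun j => plrmPi x β j)
              (xiVec α x fun j => plrmPi x β j) -
          Matrix.vecMulVec (xiVec (2 * α) x fun j => plrmPi x β j)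
            (xiVec α x fun j => plrmPi x β j) -
          Matrix.vecMulVec (xiVec α x fun j => plrmPi x β j)
            (xiVec (2 * α) x fun j => plrmPi x β j)) := by
  have hπ := plrmPi_pos x β
  have hG := (Gam_pos α x β).ne'
  have hGam : ∀ γ, ∑ j, plrmPi x β j ^ (γ + 1) = Gam γ x β := fun _ => rfl
  ext ⟨m, t⟩ ⟨n, u⟩
  simp only [sum_smul_vecMulVec_psiVec_single_apply, Matrix.add_apply, Matrix.sub_apply,
    Matrix.smul_apply, smul_eq_mul, vecMulVec_apply, Jmat, of_apply, xiVec,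
    deltaStar_mul_diagPow_mul_transpose_apply hπ, deltaStar_mulVec_diagPow_mulVec_apply hπ, hGam]
  rw [show -1 - 2 * α / (1 + α) = -(2 * α / (1 + α)) - 1 by ring, Real.rpow_sub_one hG]
  field_simp
  ring

/-- variance part of Theorem 2, single observation: for `α ≥ 0`,
`∑_j π_j·Ψ_α(e_j)Ψ_α(e_j)ᵀ = Γ(α)^{−2α/(1+α)}·J(2α)
 + Γ(α)^{−1−2α/(1+α)}·[(Γ(2α)/Γ(α))·ξ(α)ξ(α)ᵀ − ξ(2α)ξ(α)ᵀ − ξ(α)ξ(2α)ᵀ]`. -/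
theorem statement8 (d k : ℕ) (hd : 1 ≤ d) (hk : 1 ≤ k) (α : ℝ) (hα : 0 ≤ α)
    (β : Fin d → Fin (k + 1) → ℝ) (x : Fin (k + 1) → ℝ) :
    (∑ j : Fin (d + 1), plrmPi x β j •
        Matrix.vecMulVec (psiVec α x β (Pi.single j 1)) (psiVec α x β (Pi.single j 1))) =
      Gam α x β ^ (-(2 * α / (1 + α))) • Jmat (2 * α) x (fun j => plrmPi x β j) +
      Gam α x β ^ (-1 - 2 * α / (1 + α)) •
        ((Gam (2 * α) x β / Gam α x β) •
            Matrix.vecMulVec (xiVec α x fun j => plrmPi x β j)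
              (xiVec α x fun j => plrmPi x β j) -
          Matrix.vecMulVec (xiVec (2 * α) x fun j => plrmPi x β j)
            (xiVec α x fun j => plrmPi x β j) -
          Matrix.vecMulVec (xiVec α x fun j => plrmPi x β j)
            (xiVec (2 * α) x fun j => plrmPi x β j)) :=
  statement8_general d k α β x

end
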